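/- arXiv:1410.3639 — 4 statements merged into one kernel-verified Lean document; each statement's English description precedes it below -/
import Mathlib

section
/- If M ⊆ C(Θ) is compact (in the topology of uniform convergence on compact sets), then α(M) = {g ∈ C(Θ) : ∃f ∈ M, f ≤ g} is closed, and hence ψ_M(π) = ψ_{α(M)}(π) for every probability measure π on Θ with compact support. -/
/- α(M) is the Minkowski sum of M with the cone of nonnegative functions; that cone is closed, and
the sum of a compact set with a closed one is closed in a topological group. The equality of lower
envelopes only needs that integration against π is a monotone functional on C(Θ), which holds
because compact support makes every continuous function integrable. -/

open MeasureTheory Pointwise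

/-- The operation α(M) = ∪_{f∈M} {g ∈ C(Θ) : f ≤ g}. -/
def alphaSet {Θ : Type*} [TopologicalSpace Θ] (M : Set C(Θ, ℝ)) : Set C(Θ, ℝ) :=
  {g | ∃ f ∈ M, f ≤ g}

theorem ContinuousMap.isClosed_setOf_nonneg {X β : Type*} [TopologicalSpace X]
    [TopologicalSpace β] [PartialOrder β] [Zero β] [OrderClosedTopology β] :
    IsClosed {h : C(X, β) | 0 ≤ h} := by
  simp only [ContinuousMap.le_def, ContinuousMap.zero_apply, Set.ofPred_forall]
  exact isClosed_iInter fun x => isClosed_le continuous_const (continuous_eval_const x)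

section alphaSet

variable {Θ : Type*} [TopologicalSpace Θ]

theorem alphaSet_eq_add (M : Set C(Θ, ℝ)) : alphaSet M = M + {h : C(Θ, ℝ) | 0 ≤ h} := by
  ext g
  constructor
  · rintro ⟨f, hf, hfg⟩
    exact ⟨f, hf, g - f, sub_nonneg.mpr hfg, add_sub_cancel f g⟩
  · rintro ⟨f, hf, h, hh, rfl⟩
    exact ⟨f, hf, le_add_of_nonneg_right hh⟩

theorem isClosed_alphaSet {M : Set C(Θ, ℝ)} (hM : IsCompact M) : IsClosed (alphaSet M) := by
  rw [alphaSet_eq_add]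
  exact ContinuousMap.isClosed_setOf_nonneg.add_left_of_isCompact hM

theorem sInf_image_alphaSet_of_monotone {φ : C(Θ, ℝ) → ℝ} (hφ : Monotone φ) (M : Set C(Θ, ℝ)) :
    sInf (φ '' M) = sInf (φ '' alphaSet M) := by
  apply csInf_eq_csInf_of_forall_exists_le
  · rintro _ ⟨f, hf, rfl⟩
    exact ⟨φ f, ⟨f, ⟨f, hf, le_rfl⟩, rfl⟩, le_rfl⟩
  · rintro _ ⟨g, ⟨f, hf, hfg⟩, rfl⟩
    exact ⟨φ f, ⟨f, hf, rfl⟩, hφ hfg⟩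

end alphaSet

theorem Continuous.integrable_of_measure_compl_eq_zero {X E : Type*} [TopologicalSpace X]
    [MeasurableSpace X] [OpensMeasurableSpace X] [NormedAddCommGroup E]
    [SecondCountableTopologyEither X E] {μ : Measure X} [IsFiniteMeasure μ] {f : X → E}
    {K : Set X} (hf : Continuous f) (hK : IsCompact K) (hμK : μ Kᶜ = 0) : Integrable f μ := by
  obtain ⟨C, hC⟩ : ∃ C, ∀ y ∈ f '' K, ‖y‖ ≤ C := (hK.image hf).isBounded.exists_norm_le
  have hK_ae : ∀ᵐ x ∂μ, x ∈ K := hμK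
  exact (integrable_const C).mono' hf.aestronglyMeasurable
    (hK_ae.mono fun x hx => hC (f x) ⟨x, hx, rfl⟩)

theorem monotone_integral_of_measure_compl_eq_zero {X : Type*} [TopologicalSpace X]
    [MeasurableSpace X] [OpensMeasurableSpace X] {μ : Measure X} [IsFiniteMeasure μ]
    {K : Set X} (hK : IsCompact K) (hμK : μ Kᶜ = 0) :
    Monotone fun g : C(X, ℝ) => ∫ x, g x ∂μ := fun f g hfg =>
  integral_mono (f.continuous.integrable_of_measure_compl_eq_zero hK hμK)
    (g.continuous.integrable_of_measure_compl_eq_zero hK hμK) hfg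

theorem alpha_isClosed_of_isCompact_general
    {Θ : Type*} [TopologicalSpace Θ]
    [MeasurableSpace Θ] [BorelSpace Θ]
    (M : Set C(Θ, ℝ)) (hM : IsCompact M) :
    IsClosed (alphaSet M) ∧
      ∀ (π : Measure Θ), IsProbabilityMeasure π →
        (∃ K : Set Θ, IsCompact K ∧ π Kᶜ = 0) →
        sInf ((fun g : C(Θ, ℝ) => ∫ θ, g θ ∂π) '' M)
          = sInf ((fun g : C(Θ, ℝ) => ∫ θ, g θ ∂π) '' alphaSet M) :=
  ⟨isClosed_alphaSet hM, fun _ _ ⟨_, hK, hπK⟩ =>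
    sInf_image_alphaSet_of_monotone (monotone_integral_of_measure_compl_eq_zero hK hπK) M⟩

/-- if M ⊆ C(Θ) is compact then α(M) is closed, and hence
ψ_M(π) = ψ_{α(M)}(π) for every compactly supported probability measure π. -/
theorem alpha_isClosed_of_isCompact
    {Θ : Type*} [TopologicalSpace Θ] [LocallyCompactSpace Θ]
    [MeasurableSpace Θ] [BorelSpace Θ]
    (M : Set C(Θ, ℝ)) (hM : IsCompact M) :
    IsClosed (alphaSet M) ∧
      ∀ (π : Measure Θ), IsProbabilityMeasure π →
        (∃ K : Set Θ, IsCompact K ∧ π Kᶜ = 0) →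
        sInf ((fun g : C(Θ, ℝ) => ∫ θ, g θ ∂π) '' M)
          = sInf ((fun g : C(Θ, ℝ) => ∫ θ, g θ ∂π) '' alphaSet M) :=
  alpha_isClosed_of_isCompact_general M hM
end

section
/- Let H be a finite-dimensional Hilbert space, Θ and U finite sets, ρ : Θ → density operators on H, w : Θ × U → ℝ≥0, and M = (M_u)_{u∈U} a POVM (M_u ≥ 0, Σ_u M_u = I). Define the risk R_M(θ) = Σ_u w(θ,u) Tr(ρ(θ) M_u). Then min over POVMs M of max_{θ∈Θ} R_M(θ) equals max over probability distributions π on Θ of min over POVMs M of Σ_θ R_M(θ) π(θ) (both extrema are attained). -/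
open Matrix
open scoped ComplexOrder

variable {n : ℕ} {Θ U : Type*}

/-- A POVM with finite outcome set `U`: positive semidefinite operators summing to the identity. -/
def IsPOVM [Fintype U] (M : U → Matrix (Fin n) (Fin n) ℂ) : Prop :=
  (∀ u, (M u).PosSemidef) ∧ ∑ u, M u = 1

/-- The risk of the POVM `M` at parameter `θ`. -/
noncomputable def risk [Fintype U] (w : Θ → U → ℝ)
    (ρ : Θ → Matrix (Fin n) (Fin n) ℂ) (M : U → Matrix (Fin n) (Fin n) ℂ) (θ : Θ) : ℝ :=
  ∑ u, w θ u * ((ρ θ * M u).trace).re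

/-!
The POVMs form a compact convex set on which the risk vector `(risk w ρ M θ)_θ` depends linearly,
so the achievable risk vectors form a compact convex set `C ⊆ ℝ^Θ`. Let `c₀ ∈ C` minimise the
worst-case risk `v = max_θ c₀ θ`. Then `C` misses the open orthant `{c | ∀ θ, c θ < v}`, and a
hyperplane separating the two has a nonnegative normal, since the orthant is closed under
decreasing a coordinate. Normalised, that normal is a prior `π₀` with `v ≤ ∑ θ, c θ * π₀ θ` on
all of `C`, so `(c₀, π₀)` is a saddle point.
-/

open Set

theorem LinearMap.apply_nonneg_of_forall_sub_smul_lt {E : Type*} [AddCommGroup E] [Module ℝ E]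
    (f : E →ₗ[ℝ] ℝ) {a e : E} {s : ℝ} (h : ∀ t : ℝ, 0 ≤ t → f (a - t • e) < s) : 0 ≤ f e := by
  by_contra! hneg
  have hval : |s - f a| / -f e * -f e = |s - f a| := div_mul_cancel₀ _ (neg_pos.2 hneg).ne'
  have := h (|s - f a| / -f e) (div_nonneg (abs_nonneg _) (neg_pos.2 hneg).le)
  rw [map_sub, map_smul, smul_eq_mul] at this
  linarith [le_abs_self (s - f a)]

section Minimax

variable [Fintype Θ]

theorem sum_mul_le_iSup_of_mem_stdSimplex (c : Θ → ℝ) {π : Θ → ℝ} (hπ : π ∈ stdSimplex ℝ Θ) :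
    ∑ θ, c θ * π θ ≤ ⨆ θ, c θ :=
  calc ∑ θ, c θ * π θ ≤ ∑ θ, (⨆ θ', c θ') * π θ := Finset.sum_le_sum fun θ _ ↦
        mul_le_mul_of_nonneg_right (le_ciSup (Finite.bddAbove_range c) θ) (hπ.1 θ)
    _ = ⨆ θ, c θ := by rw [← Finset.mul_sum, hπ.2, mul_one]

theorem Convex.exists_mem_stdSimplex_le_sum_mul {C : Set (Θ → ℝ)} (hC : Convex ℝ C)
    (hne : C.Nonempty) {v : ℝ} (hv : ∀ c ∈ C, ∃ θ, v ≤ c θ) :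
    ∃ π ∈ stdSimplex ℝ Θ, ∀ c ∈ C, v ≤ ∑ θ, c θ * π θ := by
  classical
  set D : Set (Θ → ℝ) := univ.pi fun _ ↦ Iio v
  have hdisj : Disjoint D C := disjoint_left.2 fun d hd hdC ↦ by
    obtain ⟨θ, hθ⟩ := hv d hdC
    exact (hd θ (mem_univ θ)).not_ge hθ
  obtain ⟨f, s, hfD, hfC⟩ := geometric_hahn_banach_open (convex_pi fun _ _ ↦ convex_Iio v)
    (isOpen_set_pi finite_univ fun _ _ ↦ isOpen_Iio) hC hdisj
  set μ : Θ → ℝ := fun θ ↦ f fun j ↦ if θ = j then 1 else 0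
  have hf : ∀ x, f x = ∑ θ, x θ * μ θ := (f : (Θ → ℝ) →ₗ[ℝ] ℝ).pi_apply_eq_sum_univ
  have hμ : ∀ θ, 0 ≤ μ θ := fun θ ↦ (f : (Θ → ℝ) →ₗ[ℝ] ℝ).apply_nonneg_of_forall_sub_smul_lt
    (a := fun _ ↦ v - 1) fun t ht ↦ hfD _ fun θ' _ ↦ by
      have : 0 ≤ t * if θ = θ' then 1 else 0 := by positivity
      simp only [Pi.sub_apply, Pi.smul_apply, smul_eq_mul, mem_Iio]
      linarith
  set S := ∑ θ, μ θ
  have hS : 0 < S := by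
    refine (Finset.sum_nonneg fun θ _ ↦ hμ θ).lt_of_ne fun hS0 ↦ ?_
    have hμ0 := (Finset.sum_eq_zero_iff_of_nonneg fun θ _ ↦ hμ θ).1 hS0.symm
    have hf0 : ∀ x, f x = 0 := fun x ↦ by simp [hf, hμ0]
    obtain ⟨c₀, hc₀⟩ := hne
    linarith [hfD (fun _ ↦ v - 1) fun _ _ ↦ sub_one_lt v, hfC c₀ hc₀, hf0 (fun _ ↦ v - 1), hf0 c₀]
  have hconst : ∀ a < v, a * S < s := fun a ha ↦ by
    simpa [hf, ← Finset.mul_sum] using hfD (fun _ ↦ a) fun _ _ ↦ ha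
  refine ⟨fun θ ↦ μ θ / S, ⟨fun θ ↦ div_nonneg (hμ θ) hS.le, ?_⟩, fun c hc ↦ ?_⟩
  · rw [← Finset.sum_div, div_self hS.ne']
  · calc v ≤ s / S := le_of_forall_lt fun a ha ↦ (lt_div_iff₀ hS).2 (hconst a ha)
      _ ≤ f c / S := div_le_div_of_nonneg_right (hfC c hc) hS.le
      _ = ∑ θ, c θ * (μ θ / S) := by simp only [hf, Finset.sum_div, mul_div_assoc]

theorem IsCompact.exists_saddle_stdSimplex [Nonempty Θ] {C : Set (Θ → ℝ)} (hCc : IsCompact C)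
    (hC : Convex ℝ C) (hne : C.Nonempty) :
    ∃ c₀ ∈ C, ∃ π ∈ stdSimplex ℝ Θ, ∀ c ∈ C, ∀ θ, c₀ θ ≤ ∑ θ', c θ' * π θ' := by
  have hsup : Continuous fun c : Θ → ℝ ↦ Finset.univ.sup' Finset.univ_nonempty c :=
    Continuous.finset_sup'_apply _ fun θ _ ↦ continuous_apply θ
  obtain ⟨c₀, hc₀, hmin⟩ := hCc.exists_isMinOn hne hsup.continuousOn
  obtain ⟨π, hπ, hle⟩ := hC.exists_mem_stdSimplex_le_sum_mul hne
    (v := Finset.univ.sup' Finset.univ_nonempty c₀) fun c hc ↦ by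
      obtain ⟨θ, -, hθ⟩ := Finset.exists_mem_eq_sup' Finset.univ_nonempty c
      exact ⟨θ, hθ ▸ isMinOn_iff.1 hmin c hc⟩
  exact ⟨c₀, hc₀, π, hπ, fun c hc θ ↦ (Finset.le_sup' c₀ (Finset.mem_univ θ)).trans (hle c hc)⟩

theorem iInf_iSup_eq_iSup_iInf_of_saddle [Nonempty Θ] {X : Type*}
    (r : X → Θ → ℝ) (hbdd : ∀ π ∈ stdSimplex ℝ Θ, BddBelow (range fun x ↦ ∑ θ, r x θ * π θ))
    {x₀ : X} {π₀ : Θ → ℝ} (hπ₀ : π₀ ∈ stdSimplex ℝ Θ)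
    (hsaddle : ∀ x θ, r x₀ θ ≤ ∑ θ', r x θ' * π₀ θ') :
    (⨆ θ, r x₀ θ) = (⨅ x, ⨆ θ, r x θ) ∧
      (⨅ x, ∑ θ, r x θ * π₀ θ) = (⨆ π : stdSimplex ℝ Θ, ⨅ x, ∑ θ, r x θ * (π : Θ → ℝ) θ) ∧
      (⨅ x, ⨆ θ, r x θ) = (⨆ π : stdSimplex ℝ Θ, ⨅ x, ∑ θ, r x θ * (π : Θ → ℝ) θ) := by
  have : Nonempty X := ⟨x₀⟩
  have : Nonempty (stdSimplex ℝ Θ) := ⟨⟨π₀, hπ₀⟩⟩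
  set v := ⨆ θ, r x₀ θ
  have hv_le : ∀ x, v ≤ ∑ θ, r x θ * π₀ θ := fun x ↦ ciSup_le (hsaddle x)
  have hv_le_sup : ∀ x, v ≤ ⨆ θ, r x θ := fun x ↦
    (hv_le x).trans (sum_mul_le_iSup_of_mem_stdSimplex _ hπ₀)
  have hinf_le : ∀ π ∈ stdSimplex ℝ Θ, (⨅ x, ∑ θ, r x θ * π θ) ≤ v := fun π hπ ↦
    (ciInf_le (hbdd π hπ) x₀).trans (sum_mul_le_iSup_of_mem_stdSimplex _ hπ)
  have hminimax : (⨅ x, ⨆ θ, r x θ) = v :=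
    le_antisymm (ciInf_le ⟨v, forall_mem_range.2 hv_le_sup⟩ x₀) (le_ciInf hv_le_sup)
  have hπ₀_value : (⨅ x, ∑ θ, r x θ * π₀ θ) = v :=
    le_antisymm (hinf_le π₀ hπ₀) (le_ciInf hv_le)
  have hmaximin : (⨆ π : stdSimplex ℝ Θ, ⨅ x, ∑ θ, r x θ * (π : Θ → ℝ) θ) = v :=
    le_antisymm (ciSup_le fun π ↦ hinf_le π π.2) <| hπ₀_value.symm.trans_le <|
      le_ciSup (f := fun π : stdSimplex ℝ Θ ↦ ⨅ x, ∑ θ, r x θ * (π : Θ → ℝ) θ)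
        ⟨v, forall_mem_range.2 fun π ↦ hinf_le π π.2⟩ ⟨π₀, hπ₀⟩
  exact ⟨hminimax.symm, hπ₀_value.trans hmaximin.symm, hminimax.trans hmaximin.symm⟩

theorem exists_minimax_of_isCompact_convex_range [Nonempty Θ] {X : Type*} [Nonempty X]
    (r : X → Θ → ℝ) (hcpt : IsCompact (range r)) (hconv : Convex ℝ (range r)) :
    ∃ x₀, ∃ π₀ ∈ stdSimplex ℝ Θ,
      (⨆ θ, r x₀ θ) = (⨅ x, ⨆ θ, r x θ) ∧
      (⨅ x, ∑ θ, r x θ * π₀ θ) = (⨆ π : stdSimplex ℝ Θ, ⨅ x, ∑ θ, r x θ * (π : Θ → ℝ) θ) ∧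
      (⨅ x, ⨆ θ, r x θ) = (⨆ π : stdSimplex ℝ Θ, ⨅ x, ∑ θ, r x θ * (π : Θ → ℝ) θ) := by
  obtain ⟨_, ⟨x₀, rfl⟩, π₀, hπ₀, hsaddle⟩ := hcpt.exists_saddle_stdSimplex hconv (range_nonempty r)
  refine ⟨x₀, π₀, hπ₀, iInf_iSup_eq_iSup_iInf_of_saddle r (fun π _ ↦ ?_) hπ₀
    fun x ↦ hsaddle _ (mem_range_self x)⟩
  rw [range_comp' (fun c : Θ → ℝ ↦ ∑ θ, c θ * π θ) r]
  exact hcpt.bddBelow_image (by fun_prop)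

end Minimax

theorem isLinearMap_risk [Fintype U] (w : Θ → U → ℝ) (ρ : Θ → Matrix (Fin n) (Fin n) ℂ) :
    IsLinearMap ℝ (risk w ρ : (U → Matrix (Fin n) (Fin n) ℂ) → Θ → ℝ) where
  map_add M N := by
    ext θ
    simp [risk, mul_add, Finset.sum_add_distrib]
  map_smul a M := by
    ext θ
    simp [risk, Finset.mul_sum, mul_left_comm]

section POVM

-- With the L2 operator norm (which induces the usual topology) matrices form a C⋆-algebra, in which
-- `0 ≤ A ≤ B` implies `‖A‖ ≤ ‖B‖`.
open scoped Matrix.Norms.L2Operator MatrixOrder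

variable [Fintype U]

instance [Nonempty U] : Nonempty {M : U → Matrix (Fin n) (Fin n) ℂ // IsPOVM M} :=
  ⟨⟨fun _ ↦ (Fintype.card U : ℝ)⁻¹ • 1, fun _ ↦ PosSemidef.one.smul (by positivity), by
    simp [Finset.card_univ, ← Nat.cast_smul_eq_nsmul ℝ, smul_smul]⟩⟩

theorem convex_setOf_isPOVM : Convex ℝ {M : U → Matrix (Fin n) (Fin n) ℂ | IsPOVM M} := by
  rintro M ⟨hM, hM1⟩ N ⟨hN, hN1⟩ a b ha hb hab
  refine ⟨fun u ↦ ((hM u).smul ha).add ((hN u).smul hb), ?_⟩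
  simp [Finset.sum_add_distrib, ← Finset.smul_sum, hM1, hN1, ← add_smul, hab]

theorem isClosed_setOf_isPOVM : IsClosed {M : U → Matrix (Fin n) (Fin n) ℂ | IsPOVM M} := by
  simp only [IsPOVM, ← nonneg_iff_posSemidef, ofPred_and, ofPred_forall]
  exact (isClosed_iInter fun u ↦ CStarAlgebra.isClosed_nonneg.preimage (continuous_apply u)).inter
    (isClosed_eq (f := fun M : U → Matrix (Fin n) (Fin n) ℂ ↦ ∑ u, M u) (by fun_prop)
      continuous_const)

theorem IsPOVM.norm_le {M : U → Matrix (Fin n) (Fin n) ℂ} (hM : IsPOVM M) (u : U) :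
    ‖M u‖ ≤ ‖(1 : Matrix (Fin n) (Fin n) ℂ)‖ := by
  have hnonneg : ∀ u, 0 ≤ M u := fun u ↦ nonneg_iff_posSemidef.2 (hM.1 u)
  exact CStarAlgebra.norm_le_norm_of_nonneg_of_le (hnonneg u)
    (hM.2 ▸ Finset.single_le_sum (fun u _ ↦ hnonneg u) (Finset.mem_univ u))

theorem isCompact_setOf_isPOVM : IsCompact {M : U → Matrix (Fin n) (Fin n) ℂ | IsPOVM M} :=
  (isCompact_closedBall 0 ‖(1 : Matrix (Fin n) (Fin n) ℂ)‖).of_isClosed_subset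
    isClosed_setOf_isPOVM fun _ hM ↦
      mem_closedBall_zero_iff.2 <| (pi_norm_le_iff_of_nonneg (norm_nonneg _)).2 hM.norm_le

end POVM

theorem quantum_minimax_finite_general
    [Fintype Θ] [Nonempty Θ] [Fintype U] [Nonempty U]
    (ρ : Θ → Matrix (Fin n) (Fin n) ℂ)
    (w : Θ → U → ℝ) :
    ∃ M₀ : {M : U → Matrix (Fin n) (Fin n) ℂ // IsPOVM M},
      ∃ π₀ ∈ stdSimplex ℝ Θ,
        (⨆ θ, risk w ρ M₀.1 θ) =
            (⨅ M : {M : U → Matrix (Fin n) (Fin n) ℂ // IsPOVM M}, ⨆ θ, risk w ρ M.1 θ) ∧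
        (⨅ M : {M : U → Matrix (Fin n) (Fin n) ℂ // IsPOVM M}, ∑ θ, risk w ρ M.1 θ * π₀ θ) =
            (⨆ π : stdSimplex ℝ Θ,
              ⨅ M : {M : U → Matrix (Fin n) (Fin n) ℂ // IsPOVM M},
                ∑ θ, risk w ρ M.1 θ * (π : Θ → ℝ) θ) ∧
        (⨅ M : {M : U → Matrix (Fin n) (Fin n) ℂ // IsPOVM M}, ⨆ θ, risk w ρ M.1 θ) =
            (⨆ π : stdSimplex ℝ Θ,
              ⨅ M : {M : U → Matrix (Fin n) (Fin n) ℂ // IsPOVM M},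
                ∑ θ, risk w ρ M.1 θ * (π : Θ → ℝ) θ) := by
  have hlin := isLinearMap_risk (U := U) w ρ
  have hrange : range (fun M : {M : U → Matrix (Fin n) (Fin n) ℂ // IsPOVM M} ↦ risk w ρ M.1) =
      risk w ρ '' {M | IsPOVM M} := (image_eq_range _ _).symm
  exact exists_minimax_of_isCompact_convex_range _
    (hrange ▸ isCompact_setOf_isPOVM.image hlin.mk'.continuous_of_finiteDimensional)
    (hrange ▸ convex_setOf_isPOVM.is_linear_image hlin)

/-- the finite quantum minimax theorem, with both extrema attained. -/
theorem quantum_minimax_finite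
    [Fintype Θ] [Nonempty Θ] [Fintype U] [Nonempty U]
    (ρ : Θ → Matrix (Fin n) (Fin n) ℂ)
    (hρ : ∀ θ, (ρ θ).PosSemidef ∧ (ρ θ).trace = 1)
    (w : Θ → U → ℝ) (hw : ∀ θ u, 0 ≤ w θ u) :
    ∃ M₀ : {M : U → Matrix (Fin n) (Fin n) ℂ // IsPOVM M},
      ∃ π₀ ∈ stdSimplex ℝ Θ,
        (⨆ θ, risk w ρ M₀.1 θ) =
            (⨅ M : {M : U → Matrix (Fin n) (Fin n) ℂ // IsPOVM M}, ⨆ θ, risk w ρ M.1 θ) ∧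
        (⨅ M : {M : U → Matrix (Fin n) (Fin n) ℂ // IsPOVM M}, ∑ θ, risk w ρ M.1 θ * π₀ θ) =
            (⨆ π : stdSimplex ℝ Θ,
              ⨅ M : {M : U → Matrix (Fin n) (Fin n) ℂ // IsPOVM M},
                ∑ θ, risk w ρ M.1 θ * (π : Θ → ℝ) θ) ∧
        (⨅ M : {M : U → Matrix (Fin n) (Fin n) ℂ // IsPOVM M}, ⨆ θ, risk w ρ M.1 θ) =
            (⨆ π : stdSimplex ℝ Θ,
              ⨅ M : {M : U → Matrix (Fin n) (Fin n) ℂ // IsPOVM M},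
                ∑ θ, risk w ρ M.1 θ * (π : Θ → ℝ) θ) :=
  quantum_minimax_finite_general ρ w
end

section
/- The quantum relative entropy D(ρ‖σ), defined on pairs of density operators on a finite-dimensional Hilbert space by D(ρ‖σ) = Tr(ρ log ρ − ρ log σ) when range(ρ) ⊆ range(σ) and +∞ otherwise, is a lower semicontinuous function from S(H) × S(H) to [0, +∞]. -/
open Matrix
open scoped ComplexOrder

variable {n : ℕ}

/-- Matrix logarithm on the support, via the functional calculus of Hermitian matrices
(with the convention log 0 = 0, so that `matrixLog A` acts as the logarithm on the
support of `A`); junk value `0` for non-Hermitian matrices. -/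
noncomputable def matrixLog (A : Matrix (Fin n) (Fin n) ℂ) : Matrix (Fin n) (Fin n) ℂ :=
  if h : A.IsHermitian then h.cfc Real.log else 0

open scoped Classical in
/-- Quantum relative entropy D(ρ‖σ) = Tr(ρ log ρ − ρ log σ) if range ρ ⊆ range σ,
and +∞ otherwise. -/
noncomputable def relEntropy (ρ σ : Matrix (Fin n) (Fin n) ℂ) : ENNReal :=
  if LinearMap.range ρ.toLin' ≤ LinearMap.range σ.toLin' then
    ENNReal.ofReal ((ρ * matrixLog ρ - ρ * matrixLog σ).trace.re)
  else ⊤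

/-!
For `ε > 0` put `Dε(ρ‖σ) = Tr ρ log ρ - Tr ρ log (σ + ε)`. Both logarithms are continuous
functions of positive semidefinite matrices, since `x log x` and `log (x + ε)` are continuous
on a neighbourhood of `[0, ∞)`; so each `Dε` is continuous. In an eigenbasis `uᵢ` of `σ` with
eigenvalues `λᵢ`, `Tr ρ log (σ + ε) = ∑ᵢ wᵢ log (λᵢ + ε)` with `wᵢ = ⟨uᵢ, ρ uᵢ⟩ ≥ 0`, and
`range ρ ⊆ range σ` says exactly that `wᵢ = 0` whenever `λᵢ = 0`. As `ε ↓ 0` this sum decreases to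
`∑ᵢ wᵢ log λᵢ` if the range condition holds and to `-∞` otherwise, so `D(ρ‖σ) = sup_{ε>0} Dε(ρ‖σ)`
is a supremum of continuous functions, hence lower semicontinuous.
-/

open Filter Topology Real

section LogSum

variable {ι : Type*} [Fintype ι] {c l : ι → ℝ}

lemma tendsto_sum_mul_log_add_nhdsGT (hcl : ∀ i, l i = 0 → c i = 0) :
    Tendsto (fun ε => ∑ i, c i * log (l i + ε)) (𝓝[>] 0) (𝓝 (∑ i, c i * log (l i))) := by
  refine tendsto_finsetSum _ fun i _ => ?_
  rcases eq_or_ne (l i) 0 with hl | hl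
  · simp [hcl i hl]
  · have hlog : ContinuousAt (fun ε => log (l i + ε)) 0 :=
      (continuousAt_const.add continuousAt_id).log (by simpa using hl)
    simpa using (hlog.tendsto.const_mul (c i)).mono_left nhdsWithin_le_nhds

lemma sum_mul_log_le_sum_mul_log_add (hc : ∀ i, 0 ≤ c i) (hl : ∀ i, 0 ≤ l i)
    (hcl : ∀ i, l i = 0 → c i = 0) {ε : ℝ} (hε : 0 < ε) :
    ∑ i, c i * log (l i) ≤ ∑ i, c i * log (l i + ε) := by
  refine Finset.sum_le_sum fun i _ => ?_
  rcases (hl i).eq_or_lt with hl₀ | hl₀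
  · simp [hcl i hl₀.symm]
  · exact mul_le_mul_of_nonneg_left (log_le_log hl₀ (by linarith)) (hc i)

lemma tendsto_sum_mul_log_add_atBot (hc : ∀ i, 0 ≤ c i) (hl : ∀ i, 0 ≤ l i) {i₀ : ι}
    (hl₀ : l i₀ = 0) (hc₀ : c i₀ ≠ 0) :
    Tendsto (fun ε => ∑ i, c i * log (l i + ε)) (𝓝[>] 0) atBot := by
  classical
  have hsplit (ε : ℝ) : ∑ i, c i * log (l i + ε)
      = c i₀ * log ε + ∑ i ∈ Finset.univ.erase i₀, c i * log (l i + ε) := by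
    rw [← Finset.add_sum_erase _ _ (Finset.mem_univ i₀), hl₀, zero_add]
  simp only [hsplit]
  refine tendsto_atBot_add_right_of_ge' _ (∑ i ∈ Finset.univ.erase i₀, c i * log (l i + 1))
    (tendsto_log_nhdsGT_zero.const_mul_atBot ((hc i₀).lt_of_ne' hc₀)) ?_
  filter_upwards [Ioo_mem_nhdsGT one_pos] with ε hε
  refine Finset.sum_le_sum fun i _ => ?_
  exact mul_le_mul_of_nonneg_left (log_le_log (by linarith [hl i, hε.1]) (by linarith [hε.2]))
    (hc i)

end LogSum

namespace Matrix

variable {𝕜 ι : Type*} [RCLike 𝕜] [Fintype ι]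

lemma PosSemidef.re_dotProduct_mulVec_eq_zero_iff {A : Matrix ι ι 𝕜} (hA : A.PosSemidef)
    (x : ι → 𝕜) : RCLike.re (star x ⬝ᵥ A *ᵥ x) = 0 ↔ A *ᵥ x = 0 := by
  rw [← hA.dotProduct_mulVec_zero_iff]
  have him := (RCLike.nonneg_iff.mp (hA.dotProduct_mulVec_nonneg x)).2
  exact ⟨fun hre => RCLike.ext (by simpa using hre) (by simpa using him), fun h => by simp [h]⟩

variable [DecidableEq ι]

lemma IsHermitian.trace_mul_cfc {A : Matrix ι ι 𝕜} (hA : A.IsHermitian) (B : Matrix ι ι 𝕜)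
    (f : ℝ → ℝ) :
    (B * hA.cfc f).trace = ∑ i,
      (star ⇑(hA.eigenvectorBasis i) ⬝ᵥ B *ᵥ ⇑(hA.eigenvectorBasis i)) * f (hA.eigenvalues i) := by
  rw [IsHermitian.cfc, Unitary.conjStarAlgAut_apply, ← Matrix.mul_assoc, ← Matrix.mul_assoc,
    trace_mul_cycle, ← Matrix.mul_assoc]
  simp only [trace, diag, mul_diagonal]
  refine Finset.sum_congr rfl fun i _ => ?_
  congr 1
  simp only [mul_apply, dotProduct, mulVec, Finset.mul_sum, Finset.sum_mul, mul_assoc]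
  rw [Finset.sum_comm]
  simp [star_apply]

lemma IsHermitian.mem_range_toLin'_iff {A : Matrix ι ι 𝕜} (hA : A.IsHermitian) (v : ι → 𝕜) :
    v ∈ LinearMap.range A.toLin' ↔
      ∀ i, hA.eigenvalues i = 0 → star ⇑(hA.eigenvectorBasis i) ⬝ᵥ v = 0 := by
  constructor
  · rintro ⟨w, rfl⟩ i hi
    have hstar : star ⇑(hA.eigenvectorBasis i) ᵥ* A = star (A *ᵥ ⇑(hA.eigenvectorBasis i)) := by
      rw [star_mulVec, hA.eq]
    rw [toLin'_apply, dotProduct_mulVec, hstar, hA.mulVec_eigenvectorBasis, hi, zero_smul,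
      star_zero, zero_dotProduct]
  · intro hv
    have hexp : ∑ i, (star ⇑(hA.eigenvectorBasis i) ⬝ᵥ v) • ⇑(hA.eigenvectorBasis i) = v := by
      simpa [EuclideanSpace.inner_eq_star_dotProduct, dotProduct_comm] using
        congrArg WithLp.ofLp (hA.eigenvectorBasis.sum_repr' (WithLp.toLp 2 v))
    rw [← hexp]
    refine Submodule.sum_mem _ fun i _ => ?_
    by_cases hi : hA.eigenvalues i = 0
    · simp [hv i hi]
    · refine Submodule.smul_mem _ _ ⟨(hA.eigenvalues i : 𝕜)⁻¹ • ⇑(hA.eigenvectorBasis i), ?_⟩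
      rw [toLin'_apply, mulVec_smul, hA.mulVec_eigenvectorBasis,
        RCLike.real_smul_eq_coe_smul (K := 𝕜), smul_smul, inv_mul_cancel₀ (by exact_mod_cast hi),
        one_smul]

lemma IsHermitian.range_toLin'_le_iff {A B : Matrix ι ι 𝕜} (hA : A.IsHermitian)
    (hB : B.IsHermitian) :
    LinearMap.range B.toLin' ≤ LinearMap.range A.toLin' ↔
      ∀ i, hA.eigenvalues i = 0 → B *ᵥ ⇑(hA.eigenvectorBasis i) = 0 := by
  have hstar (i : ι) (x : ι → 𝕜) :
      star ⇑(hA.eigenvectorBasis i) ⬝ᵥ B *ᵥ x = star (B *ᵥ ⇑(hA.eigenvectorBasis i)) ⬝ᵥ x := by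
    rw [dotProduct_mulVec, star_mulVec, hB.eq]
  constructor
  · intro hBA i hi
    have h := (hA.mem_range_toLin'_iff _).mp (hBA ⟨B *ᵥ ⇑(hA.eigenvectorBasis i), rfl⟩) i hi
    rwa [toLin'_apply, hstar, dotProduct_star_self_eq_zero] at h
  · rintro hker - ⟨x, rfl⟩
    refine (hA.mem_range_toLin'_iff _).mpr fun i hi => ?_
    rw [toLin'_apply, hstar, hker i hi, star_zero, zero_dotProduct]

lemma continuousOn_cfc_posSemidef {f : ℝ → ℝ} {s : Set ℝ} (hs : IsOpen s)
    (hs₀ : Set.Ici 0 ⊆ s) (hf : ContinuousOn f s) :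
    ContinuousOn (fun A : Matrix ι ι ℂ => cfc f A) {A | A.PosSemidef} := by
  -- the L2 operator norm induces the product topology, and makes matrices a C⋆-algebra
  open scoped Matrix.Norms.L2Operator in
  refine ContinuousOn.cfc_of_mem_nhdsSet f (hs.mem_nhdsSet.mpr ?_) continuousOn_id
    (fun A hA => hA.1.isSelfAdjoint) hf
  simp only [Set.iUnion_subset_iff]
  intro A hA
  rw [hA.1.spectrum_real_eq_range_eigenvalues]
  rintro _ ⟨i, rfl⟩
  exact hs₀ (hA.eigenvalues_nonneg i)

end Matrix

lemma matrixLog_eq_cfc (A : Matrix (Fin n) (Fin n) ℂ) : matrixLog A = cfc Real.log A := by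
  by_cases hA : A.IsHermitian
  · rw [matrixLog, dif_pos hA, hA.cfc_eq]
  · rw [matrixLog, dif_neg hA]
    exact (cfc_apply_of_not_predicate A hA).symm

lemma mul_matrixLog_self {A : Matrix (Fin n) (Fin n) ℂ} (hA : A.IsHermitian) :
    A * matrixLog A = cfc (fun x => x * Real.log x) A := by
  rw [matrixLog_eq_cfc, cfc_mul (fun x => x) Real.log A (by fun_prop)
    (finite_real_spectrum.continuousOn _), cfc_id' ℝ A hA.isSelfAdjoint]

lemma matrixLog_add_smul_one {A : Matrix (Fin n) (Fin n) ℂ} (hA : A.IsHermitian) (ε : ℝ) :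
    matrixLog (A + ε • 1) = cfc (fun x => Real.log (x + ε)) A := by
  have hshift : A + ε • 1 = cfc (fun x => x + ε) A := by
    rw [cfc_add_const ε (fun x => x) A, cfc_id' ℝ A, Algebra.algebraMap_eq_smul_one]
  rw [hshift, matrixLog_eq_cfc, ← cfc_comp' Real.log (fun x => x + ε) A
    ((finite_real_spectrum.image _).continuousOn _)]

lemma re_trace_mul_matrixLog_add_smul_one {σ : Matrix (Fin n) (Fin n) ℂ} (hσ : σ.IsHermitian)
    (ρ : Matrix (Fin n) (Fin n) ℂ) (ε : ℝ) :
    (ρ * matrixLog (σ + ε • 1)).trace.re = ∑ i,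
      (star ⇑(hσ.eigenvectorBasis i) ⬝ᵥ ρ *ᵥ ⇑(hσ.eigenvectorBasis i)).re
        * Real.log (hσ.eigenvalues i + ε) := by
  simp [matrixLog_add_smul_one hσ, hσ.cfc_eq, hσ.trace_mul_cfc]

lemma re_trace_mul_matrixLog {σ : Matrix (Fin n) (Fin n) ℂ} (hσ : σ.IsHermitian)
    (ρ : Matrix (Fin n) (Fin n) ℂ) :
    (ρ * matrixLog σ).trace.re = ∑ i,
      (star ⇑(hσ.eigenvectorBasis i) ⬝ᵥ ρ *ᵥ ⇑(hσ.eigenvectorBasis i)).re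
        * Real.log (hσ.eigenvalues i) := by
  simpa using re_trace_mul_matrixLog_add_smul_one hσ ρ 0

noncomputable def regularizedRelEntropy (ε : ℝ) (ρ σ : Matrix (Fin n) (Fin n) ℂ) : ℝ :=
  (ρ * matrixLog ρ - ρ * matrixLog (σ + ε • 1)).trace.re

section RegularizedRelEntropy

variable {ρ σ : Matrix (Fin n) (Fin n) ℂ}

lemma tendsto_regularizedRelEntropy (hρ : ρ.PosSemidef) (hσ : σ.PosSemidef) :
    Tendsto (fun ε => ENNReal.ofReal (regularizedRelEntropy ε ρ σ)) (𝓝[>] 0)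
      (𝓝 (relEntropy ρ σ)) := by
  simp only [regularizedRelEntropy, relEntropy, trace_sub, Complex.sub_re,
    re_trace_mul_matrixLog hσ.1, re_trace_mul_matrixLog_add_smul_one hσ.1,
    hσ.1.range_toLin'_le_iff hρ.1, ← hρ.re_dotProduct_mulVec_eq_zero_iff]
  split_ifs with hsupp
  · exact (ENNReal.continuous_ofReal.tendsto _).comp
      (tendsto_const_nhds.sub (tendsto_sum_mul_log_add_nhdsGT hsupp))
  · simp only [not_forall] at hsupp
    obtain ⟨i, hzero, hw⟩ := hsupp
    have hbot := tendsto_sum_mul_log_add_atBot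
      (fun j => hρ.re_dotProduct_nonneg ⇑(hσ.1.eigenvectorBasis j))
      hσ.eigenvalues_nonneg hzero hw
    exact ENNReal.tendsto_ofReal_atTop.comp
      (tendsto_atTop_add_const_left _ _ (tendsto_neg_atBot_atTop.comp hbot))

lemma ofReal_regularizedRelEntropy_le_relEntropy (hρ : ρ.PosSemidef) (hσ : σ.PosSemidef) {ε : ℝ}
    (hε : 0 < ε) : ENNReal.ofReal (regularizedRelEntropy ε ρ σ) ≤ relEntropy ρ σ := by
  simp only [regularizedRelEntropy, relEntropy, trace_sub, Complex.sub_re,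
    re_trace_mul_matrixLog hσ.1, re_trace_mul_matrixLog_add_smul_one hσ.1,
    hσ.1.range_toLin'_le_iff hρ.1, ← hρ.re_dotProduct_mulVec_eq_zero_iff]
  split_ifs with hsupp
  · exact ENNReal.ofReal_le_ofReal (sub_le_sub_left (sum_mul_log_le_sum_mul_log_add
      (fun j => hρ.re_dotProduct_nonneg ⇑(hσ.1.eigenvectorBasis j)) hσ.eigenvalues_nonneg hsupp
      hε) _)
  · exact le_top

lemma relEntropy_eq_biSup_regularizedRelEntropy (hρ : ρ.PosSemidef) (hσ : σ.PosSemidef) :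
    relEntropy ρ σ = ⨆ ε > 0, ENNReal.ofReal (regularizedRelEntropy ε ρ σ) :=
  le_antisymm
    (le_of_tendsto (tendsto_regularizedRelEntropy hρ hσ) <| eventually_nhdsWithin_of_forall
      fun _ hε => le_biSup (fun ε => ENNReal.ofReal (regularizedRelEntropy ε ρ σ)) hε)
    (iSup₂_le fun _ hε => ofReal_regularizedRelEntropy_le_relEntropy hρ hσ hε)

end RegularizedRelEntropy

lemma continuousOn_regularizedRelEntropy {ε : ℝ} (hε : 0 < ε) :
    ContinuousOn (fun p : Matrix (Fin n) (Fin n) ℂ × Matrix (Fin n) (Fin n) ℂ =>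
      regularizedRelEntropy ε p.1 p.2) {p | p.1.PosSemidef ∧ p.2.PosSemidef} := by
  have hmulLog : ContinuousOn (fun p : Matrix (Fin n) (Fin n) ℂ × Matrix (Fin n) (Fin n) ℂ =>
      cfc (fun x => x * Real.log x) p.1) {p | p.1.PosSemidef ∧ p.2.PosSemidef} :=
    (continuousOn_cfc_posSemidef isOpen_univ (Set.subset_univ _)
      continuous_mul_log.continuousOn).comp continuousOn_fst fun _ hp => hp.1
  have hlogAdd : ContinuousOn (fun p : Matrix (Fin n) (Fin n) ℂ × Matrix (Fin n) (Fin n) ℂ =>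
      cfc (fun x => Real.log (x + ε)) p.2) {p | p.1.PosSemidef ∧ p.2.PosSemidef} :=
    (continuousOn_cfc_posSemidef (s := Set.Ioi (-ε)) isOpen_Ioi
      (fun x (hx : 0 ≤ x) => show -ε < x by linarith)
      ((continuous_add_const ε).continuousOn.log fun x (hx : -ε < x) =>
        (show 0 < x + ε by linarith).ne')).comp continuousOn_snd fun _ hp => hp.2
  refine ContinuousOn.congr (f := fun p => (cfc (fun x => x * Real.log x) p.1
      - p.1 * cfc (fun x => Real.log (x + ε)) p.2).trace.re) ?_ fun p hp => ?_
  · fun_prop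
  · rw [regularizedRelEntropy, mul_matrixLog_self hp.1.1, matrixLog_add_smul_one hp.2.1]

lemma relEntropy_lowerSemicontinuousOn_posSemidef :
    LowerSemicontinuousOn (fun p : Matrix (Fin n) (Fin n) ℂ × Matrix (Fin n) (Fin n) ℂ =>
      relEntropy p.1 p.2) {p | p.1.PosSemidef ∧ p.2.PosSemidef} := by
  have hsup : LowerSemicontinuousOn
      (fun p : Matrix (Fin n) (Fin n) ℂ × Matrix (Fin n) (Fin n) ℂ =>
        ⨆ ε > 0, ENNReal.ofReal (regularizedRelEntropy ε p.1 p.2))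
      {p | p.1.PosSemidef ∧ p.2.PosSemidef} :=
    lowerSemicontinuousOn_biSup fun ε hε =>
      (ENNReal.continuous_ofReal.comp_continuousOn
        (continuousOn_regularizedRelEntropy hε)).lowerSemicontinuousOn
  intro p hp
  exact LowerSemicontinuousWithinAt.congr_of_eventuallyEq (hsup p hp) hp
    (eventually_nhdsWithin_of_forall fun q hq =>
      (relEntropy_eq_biSup_regularizedRelEntropy hq.1 hq.2).symm)

/-- the quantum relative entropy is lower semicontinuous on
S(H) × S(H), the set of pairs of density operators. -/
theorem relEntropy_lowerSemicontinuousOn :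
    LowerSemicontinuousOn (fun p : Matrix (Fin n) (Fin n) ℂ × Matrix (Fin n) (Fin n) ℂ =>
        relEntropy p.1 p.2)
      {p | (p.1.PosSemidef ∧ p.1.trace = 1) ∧ (p.2.PosSemidef ∧ p.2.trace = 1)} :=
  relEntropy_lowerSemicontinuousOn_posSemidef.mono fun _ hp => ⟨hp.1.1, hp.2.1⟩
end

section
/- Define Rⁿ : [0,1] → ℝ by Rⁿ(θ) = 1 − θ for 1/n ≤ θ ≤ 1 and Rⁿ(θ) = (n−1)θ for 0 ≤ θ ≤ 1/n. Then each Rⁿ is continuous, the pointwise supremum R(θ) = sup_n Rⁿ(θ) equals 1 − θ for θ ∈ (0,1] and 0 for θ = 0, R is lower semicontinuous but not continuous, sup_{θ∈[0,1]} R(θ) = 1, and there is no Borel probability measure π on [0,1] with ∫ R dπ = 1. -/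
/-!
Each Rⁿ⁺¹ lies below 1 − θ and coincides with it once 1/(n+1) < θ, while Rⁿ⁺¹(0) = 0; so the
supremum R is 1 − θ off the origin and 0 at it. A downward jump at a single point keeps R lower
semicontinuous but not continuous, and since R(θ) → 1 as θ → 0⁺ its supremum on [0,1] is 1. This
value is never attained: R < 1 on [0,1], so any probability measure carried by [0,1] integrates R
to strictly less than 1.
-/

open MeasureTheory Set

noncomputable section

/-- Rⁿ(θ) = (n−1)θ for 0 ≤ θ ≤ 1/n and 1 − θ for 1/n ≤ θ ≤ 1. -/
def Rseq (n : ℕ) (θ : ℝ) : ℝ := if θ ≤ 1 / n then (n - 1 : ℝ) * θ else 1 - θ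

/-- R(θ) = sup_n Rⁿ(θ): equal to 1 − θ on (0,1] and 0 at 0. -/
def Rlim (θ : ℝ) : ℝ := if θ = 0 then 0 else 1 - θ

open Filter Topology

theorem MeasureTheory.integral_lt_of_ae_lt {α : Type*} [MeasurableSpace α] {μ : Measure α}
    [IsProbabilityMeasure μ] {f : α → ℝ} {c : ℝ} (hf : Integrable f μ)
    (hlt : ∀ᵐ x ∂μ, f x < c) : ∫ x, f x ∂μ < c := by
  have hgap : 0 < ∫ x, (c - f x) ∂μ := by
    rw [integral_pos_iff_support_of_nonneg_ae (hlt.mono fun x hx => (sub_pos.2 hx).le)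
      ((integrable_const c).sub hf)]
    refine pos_iff_ne_zero.2 fun hzero => ?_
    obtain ⟨x, hx, hx'⟩ := (hlt.and (measure_eq_zero_iff_ae_notMem.1 hzero)).exists
    exact hx' (sub_ne_zero.2 hx.ne')
  rw [integral_sub (integrable_const c) hf, integral_const, probReal_univ, one_smul] at hgap
  linarith

namespace Rseq

theorem continuous_succ (n : ℕ) : Continuous (Rseq (n + 1)) := by
  refine Continuous.if_le (continuous_const.mul continuous_id) (continuous_sub_left 1)
    continuous_id continuous_const fun θ hθ => ?_
  simp only [hθ]
  field_simp

theorem succ_le (n : ℕ) (θ : ℝ) : Rseq (n + 1) θ ≤ 1 - θ := by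
  unfold Rseq
  split_ifs with hle
  · push_cast at hle ⊢
    have : θ * (n + 1) ≤ 1 := (le_div_iff₀ (by positivity)).1 hle
    linarith
  · exact le_rfl

theorem succ_eq_of_lt {n : ℕ} {θ : ℝ} (hθ : 1 / ((n : ℝ) + 1) < θ) : Rseq (n + 1) θ = 1 - θ := by
  rw [Rseq, if_neg (by push_cast; exact hθ.not_ge)]

theorem apply_zero (n : ℕ) : Rseq n 0 = 0 := by
  simp [Rseq]

end Rseq

namespace Rlim

theorem apply_zero : Rlim 0 = 0 := if_pos rfl

theorem apply_of_ne_zero {θ : ℝ} (hθ : θ ≠ 0) : Rlim θ = 1 - θ := if_neg hθ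

theorem nonneg {θ : ℝ} (hθ : θ ≤ 1) : 0 ≤ Rlim θ := by
  unfold Rlim
  split_ifs <;> linarith

theorem lt_one {θ : ℝ} (hθ : 0 ≤ θ) : Rlim θ < 1 := by
  rcases hθ.eq_or_lt with rfl | hpos
  · simp [apply_zero]
  · rw [apply_of_ne_zero hpos.ne']
    linarith

theorem iSup_Rseq_succ {θ : ℝ} (hθ : 0 ≤ θ) : ⨆ n : ℕ, Rseq (n + 1) θ = Rlim θ := by
  rcases hθ.eq_or_lt with rfl | hpos
  · simp [Rseq.apply_zero, apply_zero]
  · rw [apply_of_ne_zero hpos.ne']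
    obtain ⟨N, hN⟩ := exists_nat_one_div_lt hpos
    exact ciSup_eq_of_forall_le_of_forall_lt_exists_gt (fun n => Rseq.succ_le n θ)
      fun w hw => ⟨N, (Rseq.succ_eq_of_lt hN).symm ▸ hw⟩

theorem eventuallyEq_of_ne_zero {θ : ℝ} (hθ : θ ≠ 0) : Rlim =ᶠ[𝓝 θ] fun x => 1 - x :=
  (eventually_ne_nhds hθ).mono fun _ => apply_of_ne_zero

theorem lowerSemicontinuous : LowerSemicontinuous Rlim := by
  intro θ
  rcases eq_or_ne θ 0 with rfl | hθ
  · intro y hy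
    rw [apply_zero] at hy
    filter_upwards [Iio_mem_nhds one_pos] with x hx using hy.trans_le (nonneg hx.le)
  · exact ((continuous_sub_left 1).continuousAt.congr
      (eventuallyEq_of_ne_zero hθ).symm).lowerSemicontinuousAt

theorem measurable : Measurable Rlim :=
  lowerSemicontinuous.measurable

theorem tendsto_nhdsGT_zero : Tendsto Rlim (𝓝[>] 0) (𝓝 1) := by
  have hlim : Tendsto (fun x : ℝ => 1 - x) (𝓝[>] 0) (𝓝 1) :=
    ((continuous_sub_left 1).tendsto' 0 1 (sub_zero 1)).mono_left nhdsWithin_le_nhds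
  exact hlim.congr'
    (eventually_nhdsWithin_of_forall fun x hx => (apply_of_ne_zero (ne_of_gt hx)).symm)

theorem not_continuousWithinAt_zero : ¬ ContinuousWithinAt Rlim (Icc 0 1) 0 := by
  intro hcont
  have hzero : Tendsto Rlim (𝓝[>] 0) (𝓝 0) := by
    rw [← nhdsWithin_Ioo_eq_nhdsGT one_pos]
    simpa [ContinuousWithinAt, apply_zero] using
      hcont.tendsto.mono_left (nhdsWithin_mono _ Ioo_subset_Icc_self)
  exact zero_ne_one (tendsto_nhds_unique hzero tendsto_nhdsGT_zero)

theorem iSup_Icc : ⨆ θ : Icc (0 : ℝ) 1, Rlim θ = 1 := by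
  refine ciSup_eq_of_forall_le_of_forall_lt_exists_gt (fun θ => (lt_one θ.2.1).le) fun w hw => ?_
  have hnear : ∀ᶠ x in 𝓝[>] (0 : ℝ), w < Rlim x ∧ x ∈ Icc (0 : ℝ) 1 := by
    refine (tendsto_nhdsGT_zero.eventually (Ioi_mem_nhds hw)).and ?_
    rw [← nhdsWithin_Ioo_eq_nhdsGT one_pos]
    exact eventually_nhdsWithin_of_forall fun x hx => Ioo_subset_Icc_self hx
  obtain ⟨x, hwx, hx⟩ := hnear.exists
  exact ⟨⟨x, hx⟩, hwx⟩

theorem integrable {μ : Measure ℝ} [IsFiniteMeasure μ] (hμ : ∀ᵐ θ ∂μ, θ ∈ Icc (0 : ℝ) 1) :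
    Integrable Rlim μ :=
  Integrable.of_bound measurable.aestronglyMeasurable 1 <| hμ.mono fun θ hθ => by
    rw [Real.norm_eq_abs, abs_le]
    exact ⟨by linarith [nonneg hθ.2], (lt_one hθ.1).le⟩

end Rlim

/-- each Rⁿ is continuous on [0,1]; the pointwise supremum is R, which is
lower semicontinuous but not continuous on [0,1]; sup R = 1; and no Borel probability
measure π on [0,1] satisfies ∫ R dπ = 1. -/
theorem pathological_loss :
    (∀ n : ℕ, ContinuousOn (Rseq (n + 1)) (Icc (0 : ℝ) 1)) ∧
    (∀ θ ∈ Icc (0 : ℝ) 1, (⨆ n : ℕ, Rseq (n + 1) θ) = Rlim θ) ∧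
    LowerSemicontinuousOn Rlim (Icc (0 : ℝ) 1) ∧
    ¬ ContinuousOn Rlim (Icc (0 : ℝ) 1) ∧
    (⨆ θ : Icc (0 : ℝ) 1, Rlim θ) = 1 ∧
    ∀ π : Measure ℝ, IsProbabilityMeasure π → π (Icc (0 : ℝ) 1)ᶜ = 0 →
      (∫ θ, Rlim θ ∂π) ≠ 1 := by
  refine ⟨fun n => (Rseq.continuous_succ n).continuousOn,
    fun θ hθ => Rlim.iSup_Rseq_succ hθ.1, Rlim.lowerSemicontinuous.lowerSemicontinuousOn _,
    fun hcont => Rlim.not_continuousWithinAt_zero (hcont 0 ⟨le_rfl, zero_le_one⟩),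
    Rlim.iSup_Icc, fun π _ hπ => ?_⟩
  have hIcc : ∀ᵐ θ ∂π, θ ∈ Icc (0 : ℝ) 1 := mem_ae_iff.2 hπ
  exact (integral_lt_of_ae_lt (Rlim.integrable hIcc) (hIcc.mono fun θ hθ => Rlim.lt_one hθ.1)).ne
end
end
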